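/- Let (R, m) be a commutative Noetherian local ring of prime characteristic p > 2, I an ideal of R with I ≠ R, and S = S(1) the pseudocanonical cover of R via f = 1. Let x ∈ I be a nonzerodivisor on R and x₂, …, x_d ∈ R such that x, x₂, …, x_d is a regular sequence on R; set J = (x, x₂, …, x_d)R and assume R/J has finite length. Let z ∈ R with z ∉ I + (x₂, …, x_d)R and u ∈ I with u − x·z ∈ J·I. Assume: (i) m·u ⊆ J·I; (ii) every b ∈ I with m·b ⊆ J·I satisfies b ∈ R·u + J·I; (iii) every a ∈ R with a·I ⊆ J·I satisfies a ∈ J; and (iv) for every w ∈ R and every e ≥ 0, w^{p^e} ∈ I + (x₂^{p^e}, …, x_d^{p^e})R implies w ∈ I + (x₂, …, x_d)R. Then the ideal JS of S is Frobenius closed: every s ∈ S with s^{p^e} ∈ (JS)^[p^e] for some e ≥ 0 lies in JS. -/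

import Mathlib

open Polynomial

/-- The set `{a + b·t : a ∈ R, b ∈ I}` inside `A = R[T]/(T² − f)`. -/
def pccSet {R : Type*} [CommRing R] (I : Ideal R) (f : R) :
    Set (AdjoinRoot (X ^ 2 - C f)) :=
  {x | ∃ a b : R, b ∈ I ∧
    x = algebraMap R (AdjoinRoot (X ^ 2 - C f)) a +
        algebraMap R (AdjoinRoot (X ^ 2 - C f)) b * AdjoinRoot.root (X ^ 2 - C f)}

/-- The pseudocanonical cover `S(f) = R + It` of `R` via `f`, as a subring of
`A = R[T]/(T² − f)`. -/
noncomputable def pcc {R : Type*} [CommRing R] (I : Ideal R) (f : R) :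
    Subring (AdjoinRoot (X ^ 2 - C f)) where
  carrier := pccSet I f
  one_mem' := ⟨1, 0, I.zero_mem, by simp⟩
  zero_mem' := ⟨0, 0, I.zero_mem, by simp⟩
  add_mem' := by
    rintro x y ⟨a, b, hb, rfl⟩ ⟨c, d, hd, rfl⟩
    exact ⟨a + c, b + d, I.add_mem hb hd, by simp only [map_add]; ring⟩
  neg_mem' := by
    rintro x ⟨a, b, hb, rfl⟩
    exact ⟨-a, -b, I.neg_mem hb, by simp only [map_neg]; ring⟩
  mul_mem' := by
    rintro x y ⟨a, b, hb, rfl⟩ ⟨c, d, hd, rfl⟩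
    refine ⟨a * c + b * d * f, a * d + b * c, I.add_mem (I.mul_mem_left a hd) (I.mul_mem_right c hb), ?_⟩
    have hroot : AdjoinRoot.root (X ^ 2 - C f) ^ 2 =
        algebraMap R (AdjoinRoot (X ^ 2 - C f)) f := by
      have h := AdjoinRoot.eval₂_root (X ^ 2 - C f)
      simp only [eval₂_sub, eval₂_pow, eval₂_X, eval₂_C, sub_eq_zero] at h
      exact h
    simp only [map_add, map_mul]
    linear_combination (algebraMap R (AdjoinRoot (X ^ 2 - C f)) b *
      algebraMap R (AdjoinRoot (X ^ 2 - C f)) d) * hroot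

/-- The canonical ring homomorphism `R → S(f)`. -/
noncomputable def toPcc {R : Type*} [CommRing R] (I : Ideal R) (f : R) :
    R →+* pcc I f :=
  (algebraMap R (AdjoinRoot (X ^ 2 - C f))).codRestrict (pcc I f)
    (fun a => ⟨a, 0, I.zero_mem, by simp⟩)

/-- The element `u·t` of `S(f)`, for `u ∈ I`. -/
noncomputable def utElem {R : Type*} [CommRing R] (I : Ideal R) (f : R) (u : R) (hu : u ∈ I) :
    pcc I f :=
  ⟨algebraMap R (AdjoinRoot (X ^ 2 - C f)) u * AdjoinRoot.root (X ^ 2 - C f),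
    0, u, hu, by simp⟩

/-- The bracket power `J^[q]`: the ideal generated by the `q`-th powers of the
elements of `J`. -/
def bracketPow {B : Type*} [CommRing B] (J : Ideal B) (q : ℕ) : Ideal B :=
  Ideal.span ((fun y => y ^ q) '' (J : Set B))

/-- An ideal `J` of a ring of prime characteristic `p` is Frobenius closed if every
`x` with `x^{p^e} ∈ J^[p^e]` for some `e ≥ 0` lies in `J`. -/
def FrobeniusClosed {B : Type*} [CommRing B] (p : ℕ) (J : Ideal B) : Prop :=
  ∀ x : B, (∃ e : ℕ, x ^ p ^ e ∈ bracketPow J (p ^ e)) → x ∈ J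

/-!
Write `S = R ⊕ I t` with `t² = 1`. Since `p` is odd, `(a + b t) ^ q = a ^ q + b ^ q t`, and
`(JS)^[q] = J^[q] ⊕ J^[q] I t`; so it suffices to show that `a ^ q ∈ J^[q]` forces `a ∈ J`, and
that `b ∈ I`, `b ^ q ∈ J^[q] I` force `b ∈ J I`.

For the second claim, if `b ∉ J I` then, `R/J` having finite length, some multiple of `b` lies in
the socle of `I / J I`, which is generated by `u`; hence `u ≡ r b` modulo `J I` and
`(x z) ^ q ∈ J^[q] I`. As `x ^ q` is a nonzerodivisor modulo `(x₂ ^ q, …, x_d ^ q)` (powers of a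
regular sequence in a local ring are regular), `z ^ q ∈ I + (x₂ ^ q, …, x_d ^ q)`, against (iv).

For the first, (iv) gives `a = b + g` with `b ∈ I` and `g ∈ (x₂, …, x_d)`; then
`(b c) ^ q ∈ J^[q] I` for every `c ∈ I`, so `b I ⊆ J I` by the second claim, and `b ∈ J` by (iii).
-/

open RingTheory.Sequence IsLocalRing

section RegularSequence

variable {R : Type*} [CommRing R] [IsLocalRing R]

theorem RingTheory.Sequence.IsWeaklyRegular.map_pow {M : Type*} [AddCommGroup M] [Module R M]
    [IsNoetherian R M] {rs : List R} (h : IsWeaklyRegular M rs)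
    (hrs : ∀ r ∈ rs, r ∈ maximalIdeal R) {q : ℕ} (hq : q ≠ 0) :
    IsWeaklyRegular M (rs.map (· ^ q)) := by
  induction rs generalizing M with
  | nil => simp
  | cons a l ih =>
    have ha : a ∈ maximalIdeal R := hrs a List.mem_cons_self
    have hl : ∀ r ∈ l, r ∈ maximalIdeal R := fun r hr => hrs r (List.mem_cons_of_mem a hr)
    -- In a local ring the order of a regular sequence is irrelevant, so `a` may be moved to the
    -- end, where only its regularity on the quotient matters and passes to `a ^ q`.
    obtain ⟨hl_reg, ha_reg⟩ := (isWeaklyRegular_append_iff M l [a]).1 <|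
      IsLocalRing.isWeaklyRegular_of_perm_of_subset_maximalIdeal h
        (List.perm_append_singleton a l).symm hrs
    have hlq : IsWeaklyRegular M (l ++ [a ^ q]) :=
      (isWeaklyRegular_append_iff M l _).2
        ⟨hl_reg, (isWeaklyRegular_singleton_iff _ _).2
          (((isWeaklyRegular_singleton_iff _ _).1 ha_reg).pow q)⟩
    have haq_mem : a ^ q ∈ maximalIdeal R := Ideal.pow_mem_of_mem _ ha q (Nat.pos_of_ne_zero hq)
    obtain ⟨haq, hrest⟩ := (isWeaklyRegular_cons_iff M _ _).1 <|
      IsLocalRing.isWeaklyRegular_of_perm_of_subset_maximalIdeal hlq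
        (List.perm_append_singleton _ l) (by simpa [or_imp, forall_and] using ⟨hl, haq_mem⟩)
    exact (isWeaklyRegular_cons_iff M _ _).2 ⟨haq, ih hrest hl⟩

theorem RingTheory.Sequence.IsRegular.mem_ofList_map_pow_of_pow_mul_mem [IsNoetherianRing R]
    {x : R} {rs : List R} (h : IsRegular R (x :: rs)) {q : ℕ} (hq : q ≠ 0) {w : R}
    (hw : x ^ q * w ∈ Ideal.ofList (rs.map (· ^ q))) :
    w ∈ Ideal.ofList (rs.map (· ^ q)) := by
  have hmem : ∀ r ∈ x :: rs, r ∈ maximalIdeal R := fun r hr =>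
    le_maximalIdeal (J := Ideal.ofList (x :: rs))
      (fun htop => h.top_ne_smul (by rw [htop, Submodule.top_smul]))
      (Ideal.subset_span (show r ∈ {r | r ∈ x :: rs} from hr))
  have hperm := (List.perm_append_singleton x rs).symm
  have hreg := (IsLocalRing.isWeaklyRegular_of_perm_of_subset_maximalIdeal h.toIsWeaklyRegular
    hperm hmem).map_pow (fun r hr => hmem r (hperm.mem_iff.2 hr)) hq
  rw [List.map_append, List.map_singleton, isWeaklyRegular_append_iff,
    isWeaklyRegular_singleton_iff] at hreg
  have hmk : ∀ v : R, (Submodule.Quotient.mk v :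
      R ⧸ (Ideal.ofList (rs.map (· ^ q)) • ⊤ : Submodule R R)) = 0 ↔
      v ∈ Ideal.ofList (rs.map (· ^ q)) := fun v => by
    rw [Submodule.Quotient.mk_eq_zero, Ideal.smul_eq_mul, Ideal.mul_top]
  refine (hmk w).1 (hreg.2 ?_)
  simp only [smul_zero, ← Submodule.Quotient.mk_smul, smul_eq_mul]
  exact (hmk _).2 hw

end RegularSequence

section Ideals

variable {R : Type*} [CommRing R]

theorem exists_mul_notMem_of_pow_mul_mem (𝔪 K : Ideal R) :
    ∀ (n : ℕ) {v : R}, v ∉ K → (∀ r ∈ 𝔪 ^ n, r * v ∈ K) →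
      ∃ c : R, c * v ∉ K ∧ ∀ r ∈ 𝔪, r * (c * v) ∈ K
  | 0, v, hv, hn => absurd (by simpa using hn 1 (by simp)) hv
  | n + 1, v, hv, hn => by
    by_cases hsoc : ∀ r ∈ 𝔪, r * v ∈ K
    · exact ⟨1, by rwa [one_mul], fun r hr => by rw [one_mul]; exact hsoc r hr⟩
    obtain ⟨r₀, hr₀, hr₀v⟩ : ∃ r ∈ 𝔪, r * v ∉ K := by simpa using hsoc
    obtain ⟨c, hc, hcm⟩ := exists_mul_notMem_of_pow_mul_mem 𝔪 K n hr₀v fun r hr => by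
      rw [← mul_assoc]; exact hn _ (pow_succ 𝔪 n ▸ Ideal.mul_mem_mul hr hr₀)
    exact ⟨c * r₀, by rwa [mul_assoc], fun r hr => by rw [mul_assoc c]; exact hcm r hr⟩

theorem mem_span_singleton_sup_of_mem_span_singleton_sup [IsLocalRing R] {K : Ideal R} {u v : R}
    (hu : ∀ r ∈ maximalIdeal R, r * u ∈ K) (hv : v ∉ K) (hvu : v ∈ Ideal.span {u} ⊔ K) :
    u ∈ Ideal.span {v} ⊔ K := by
  obtain ⟨_, hru, k, hk, rfl⟩ := Submodule.mem_sup.1 hvu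
  obtain ⟨r, rfl⟩ := Ideal.mem_span_singleton'.1 hru
  have hr : IsUnit r := by
    by_contra hr
    exact hv (K.add_mem (hu r ((mem_maximalIdeal r).2 hr)) hk)
  obtain ⟨ρ, hρ⟩ := hr.exists_left_inv
  refine Submodule.mem_sup.2 ⟨ρ * (r * u + k), Ideal.mem_span_singleton'.2 ⟨ρ, rfl⟩,
    -(ρ * k), K.neg_mem (K.mul_mem_left ρ hk), ?_⟩
  linear_combination u * hρ

theorem mem_sup_of_mul_mem_span_singleton_sup_mul {y w : R} {I N : Ideal R}
    (hy : ∀ v, y * v ∈ N → v ∈ N) (h : y * w ∈ (Ideal.span {y} ⊔ N) * I) : w ∈ I ⊔ N := by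
  rw [Ideal.sup_mul] at h
  obtain ⟨_, hyγ, n, hn, hw⟩ := Submodule.mem_sup.1 h
  obtain ⟨γ, hγ, rfl⟩ := Ideal.mem_span_singleton_mul.1 hyγ
  have hwγ : w - γ ∈ N := hy _ (by
    rw [mul_sub, ← hw, add_sub_cancel_left]; exact Ideal.mul_le_left hn)
  simpa only [add_sub_cancel] using Submodule.add_mem_sup hγ hwγ

theorem exists_maximalIdeal_pow_le_of_isFiniteLength [IsLocalRing R] {J : Ideal R}
    (h : IsFiniteLength R (R ⧸ J)) : ∃ n, maximalIdeal R ^ n ≤ J := by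
  have : IsArtinianRing (R ⧸ J) :=
    isArtinian_of_tower R (isFiniteLength_iff_isNoetherian_isArtinian.1 h).2
  exact exists_maximalIdeal_pow_le_of_isArtinianRing_quotient J

end Ideals

section BracketPow

variable {B : Type*} [CommRing B]

theorem pow_mem_bracketPow {J : Ideal B} (q : ℕ) {w : B} (hw : w ∈ J) : w ^ q ∈ bracketPow J q :=
  Ideal.subset_span ⟨w, hw, rfl⟩

theorem bracketPow_le_self (J : Ideal B) {q : ℕ} (hq : q ≠ 0) : bracketPow J q ≤ J :=
  Ideal.span_le.2 <| Set.image_subset_iff.2 fun _ hw =>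
    J.pow_mem_of_mem hw q (Nat.pos_of_ne_zero hq)

variable (p : ℕ) [ExpChar B p]

theorem bracketPow_eq_map (J : Ideal B) (e : ℕ) :
    bracketPow J (p ^ e) = J.map (iterateFrobenius B p e) :=
  rfl

theorem bracketPow_span (s : Set B) (e : ℕ) :
    bracketPow (Ideal.span s) (p ^ e) = Ideal.span ((· ^ p ^ e) '' s) := by
  rw [bracketPow_eq_map, Ideal.map_span]
  rfl

theorem bracketPow_mul_le (J I : Ideal B) (e : ℕ) :
    bracketPow (J * I) (p ^ e) ≤ bracketPow J (p ^ e) * I := by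
  rw [bracketPow_eq_map, Ideal.map_mul, ← bracketPow_eq_map, ← bracketPow_eq_map]
  exact Ideal.mul_mono_right (bracketPow_le_self I (expChar_pow_pos B p e).ne')

theorem bracketPow_map {C : Type*} [CommRing C] [ExpChar C p] (φ : B →+* C) (J : Ideal B)
    (e : ℕ) : bracketPow (J.map φ) (p ^ e) = (bracketPow J (p ^ e)).map φ := by
  simp only [bracketPow_eq_map, Ideal.map_map]
  congr 1
  ext
  simp [iterateFrobenius_def]

end BracketPow

section PseudocanonicalCover

variable {R : Type*} [CommRing R] (I : Ideal R) (f : R)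

theorem root_X_pow_two_sub_C_sq :
    AdjoinRoot.root (X ^ 2 - C f) ^ 2 = algebraMap R (AdjoinRoot (X ^ 2 - C f)) f := by
  have h := AdjoinRoot.eval₂_root (X ^ 2 - C f)
  rw [AdjoinRoot.algebraMap_eq]
  simpa only [eval₂_sub, eval₂_pow, eval₂_X, eval₂_C, sub_eq_zero] using h

theorem root_X_pow_two_sub_C_pow_of_odd {n : ℕ} (hn : Odd n) :
    AdjoinRoot.root (X ^ 2 - C f) ^ n =
      algebraMap R (AdjoinRoot (X ^ 2 - C f)) (f ^ (n / 2)) * AdjoinRoot.root (X ^ 2 - C f) := by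
  obtain ⟨k, rfl⟩ := hn
  rw [show (2 * k + 1) / 2 = k by omega, pow_succ (AdjoinRoot.root _), pow_mul,
    root_X_pow_two_sub_C_sq, map_pow]

theorem algebraMap_add_mul_root_inj [Nontrivial R] {a b a' b' : R}
    (h : algebraMap R (AdjoinRoot (X ^ 2 - C f)) a +
        algebraMap R (AdjoinRoot (X ^ 2 - C f)) b * AdjoinRoot.root (X ^ 2 - C f) =
      algebraMap R (AdjoinRoot (X ^ 2 - C f)) a' +
        algebraMap R (AdjoinRoot (X ^ 2 - C f)) b' * AdjoinRoot.root (X ^ 2 - C f)) :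
    a = a' ∧ b = b' := by
  have hmk : ∀ c d : R, algebraMap R (AdjoinRoot (X ^ 2 - C f)) c +
      algebraMap R (AdjoinRoot (X ^ 2 - C f)) d * AdjoinRoot.root (X ^ 2 - C f) =
      AdjoinRoot.mk (X ^ 2 - C f) (C d * X + C c) := fun c d => by
    simp [AdjoinRoot.algebraMap_eq, AdjoinRoot.mk_X, add_comm]
  rw [hmk, hmk, AdjoinRoot.mk_eq_mk] at h
  -- a polynomial of degree `< 2` divisible by the monic quadratic `X ^ 2 - C f` vanishes
  have h0 : C (b - b') * X + C (a - a') = 0 := by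
    by_contra h0
    refine (monic_X_pow_sub_C f two_ne_zero).not_dvd_of_degree_lt h0 ?_ ?_
    · rw [degree_X_pow_sub_C two_pos]
      exact degree_linear_le.trans_lt (by norm_num)
    · convert h using 1
      simp only [map_sub]
      ring
  have hc0 := congrArg (coeff · 0) h0
  have hc1 := congrArg (coeff · 1) h0
  simp only [coeff_add, coeff_C_mul_X, coeff_C, coeff_zero] at hc0 hc1
  exact ⟨sub_eq_zero.1 (by simpa using hc0), sub_eq_zero.1 (by simpa using hc1)⟩

theorem algebraMap_adjoinRoot_X_pow_two_sub_C_injective [Nontrivial R] :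
    Function.Injective (algebraMap R (AdjoinRoot (X ^ 2 - C f))) := fun a a' h =>
  (algebraMap_add_mul_root_inj f (b := 0) (b' := 0) (by simpa using h)).1

instance charP_adjoinRoot_X_pow_two_sub_C [Nontrivial R] (p : ℕ) [CharP R p] :
    CharP (AdjoinRoot (X ^ 2 - C f)) p :=
  charP_of_injective_algebraMap (algebraMap_adjoinRoot_X_pow_two_sub_C_injective f) p

theorem add_mul_root_pow_char_pow [Nontrivial R] {p : ℕ} [Fact p.Prime] [CharP R p]
    (hp : p ≠ 2) (e : ℕ) (a b : R) :
    (algebraMap R (AdjoinRoot (X ^ 2 - C f)) a +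
        algebraMap R (AdjoinRoot (X ^ 2 - C f)) b * AdjoinRoot.root (X ^ 2 - C f)) ^ p ^ e =
      algebraMap R (AdjoinRoot (X ^ 2 - C f)) (a ^ p ^ e) +
        algebraMap R (AdjoinRoot (X ^ 2 - C f)) (b ^ p ^ e * f ^ (p ^ e / 2)) *
          AdjoinRoot.root (X ^ 2 - C f) := by
  have hodd : Odd (p ^ e) := ((Fact.out : p.Prime).odd_of_ne_two hp).pow
  rw [add_pow_char_pow, mul_pow, root_X_pow_two_sub_C_pow_of_odd f hodd]
  simp only [map_mul, map_pow]
  ring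

@[simp]
theorem coe_toPcc (a : R) :
    (toPcc I f a : AdjoinRoot (X ^ 2 - C f)) = algebraMap R (AdjoinRoot (X ^ 2 - C f)) a :=
  rfl

theorem mem_map_toPcc_iff (K : Ideal R) (s : pcc I f) :
    s ∈ K.map (toPcc I f) ↔ ∃ a ∈ K, ∃ b ∈ K * I,
      (s : AdjoinRoot (X ^ 2 - C f)) = algebraMap R _ a + algebraMap R _ b * AdjoinRoot.root _ := by
  constructor
  · intro hs
    induction hs using Submodule.span_induction with
    | mem _ hs =>
      obtain ⟨a, ha, rfl⟩ := hs
      exact ⟨a, ha, 0, zero_mem _, by simp⟩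
    | zero => exact ⟨0, zero_mem _, 0, zero_mem _, by simp⟩
    | add s s' _ _ hs hs' =>
      obtain ⟨a, ha, b, hb, hsab⟩ := hs
      obtain ⟨a', ha', b', hb', hsab'⟩ := hs'
      exact ⟨a + a', K.add_mem ha ha', b + b', Ideal.add_mem _ hb hb', by
        simp only [Subring.coe_add, hsab, hsab', map_add]; ring⟩
    | smul c s _ hs =>
      obtain ⟨a, ha, b, hb, hsab⟩ := hs
      obtain ⟨α, β, hβ, hc⟩ := c.2
      -- `(α + β t)(a + b t) = (α a + β b f) + (α b + β a) t`
      refine ⟨α * a + β * b * f, K.add_mem (K.mul_mem_left α ha)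
          (K.mul_mem_right f (K.mul_mem_left β (Ideal.mul_le_left hb))),
        α * b + β * a, Ideal.add_mem _ (Ideal.mul_mem_left _ α hb)
          (mul_comm a β ▸ Ideal.mul_mem_mul ha hβ), ?_⟩
      simp only [smul_eq_mul, Subring.coe_mul, hc, hsab, map_add, map_mul]
      linear_combination (algebraMap R _ β * algebraMap R _ b) * root_X_pow_two_sub_C_sq f
  · rintro ⟨a, ha, b, hb, hs⟩
    obtain ⟨v, hv, hvb⟩ : ∃ v ∈ K.map (toPcc I f),
        (v : AdjoinRoot (X ^ 2 - C f)) = algebraMap R _ b * AdjoinRoot.root _ := by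
      clear hs
      induction hb using Submodule.mul_induction_on' with
      | mem_mul_mem k hk i hi =>
        exact ⟨toPcc I f k * utElem I f i hi, Ideal.mul_mem_right _ _ (Ideal.mem_map_of_mem _ hk),
          by simp [utElem, mul_assoc]⟩
      | add b _ b' _ hb hb' =>
        obtain ⟨v, hv, hvb⟩ := hb
        obtain ⟨v', hv', hvb'⟩ := hb'
        exact ⟨v + v', Ideal.add_mem _ hv hv', by
          simp only [Subring.coe_add, hvb, hvb', map_add]; ring⟩
    have : s = toPcc I f a + v := Subtype.ext (by simp [hs, hvb])
    exact this ▸ Ideal.add_mem _ (Ideal.mem_map_of_mem _ ha) hv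

end PseudocanonicalCover

theorem FrobeniusClosed.map_toPcc_one {R : Type*} [CommRing R] [Nontrivial R] {p : ℕ}
    [Fact p.Prime] [CharP R p] (hp : p ≠ 2) {I J : Ideal R} (hJ : FrobeniusClosed p J)
    (hJI : ∀ e, ∀ b ∈ I, b ^ p ^ e ∈ bracketPow J (p ^ e) * I → b ∈ J * I) :
    FrobeniusClosed p (J.map (toPcc I 1)) := by
  rintro s ⟨e, hs⟩
  rw [bracketPow_map] at hs
  obtain ⟨a', ha', b', hb', hs'⟩ := (mem_map_toPcc_iff I 1 _ _).1 hs
  obtain ⟨a, b, hb, hsab⟩ := s.2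
  rw [SubmonoidClass.coe_pow, hsab, add_mul_root_pow_char_pow 1 hp, one_pow, mul_one] at hs'
  obtain ⟨rfl, rfl⟩ := algebraMap_add_mul_root_inj 1 hs'
  exact (mem_map_toPcc_iff I 1 J s).2 ⟨a, hJ a ⟨e, ha'⟩, b, hJI e b hb hb', hsab⟩

section FrobeniusPowers

variable {R : Type*} [CommRing R] {p : ℕ} [ExpChar R p] {I J : Ideal R}

theorem mem_mul_of_pow_mem_bracketPow_mul [IsLocalRing R] {u w : R} {n e : ℕ}
    (hn : maximalIdeal R ^ n ≤ J) (hu : ∀ r ∈ maximalIdeal R, r * u ∈ J * I)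
    (hsoc : ∀ b ∈ I, (∀ r ∈ maximalIdeal R, r * b ∈ J * I) → b ∈ Ideal.span {u} + J * I)
    (huw : u - w ∈ J * I) (hw : w ^ p ^ e ∉ bracketPow J (p ^ e) * I) {b : R} (hb : b ∈ I)
    (hbq : b ^ p ^ e ∈ bracketPow J (p ^ e) * I) : b ∈ J * I := by
  by_contra hbJI
  obtain ⟨c, hc, hcm⟩ := exists_mul_notMem_of_pow_mul_mem (maximalIdeal R) (J * I) n hbJI
    fun r hr => Ideal.mul_mem_mul (hn hr) hb
  obtain ⟨_, hrcb, k, hk, hu'⟩ := Submodule.mem_sup.1 <|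
    mem_span_singleton_sup_of_mem_span_singleton_sup hu hc (hsoc _ (I.mul_mem_left c hb) hcm)
  obtain ⟨r, rfl⟩ := Ideal.mem_span_singleton'.1 hrcb
  have hfrob : ∀ v ∈ J * I, v ^ p ^ e ∈ bracketPow J (p ^ e) * I := fun v hv =>
    bracketPow_mul_le p J I e (pow_mem_bracketPow _ hv)
  have huq : u ^ p ^ e ∈ bracketPow J (p ^ e) * I := by
    rw [← hu', add_pow_expChar_pow, mul_pow, mul_pow]
    exact add_mem (Ideal.mul_mem_left _ _ (Ideal.mul_mem_left _ _ hbq)) (hfrob k hk)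
  refine hw ?_
  rw [← sub_sub_cancel u w, sub_pow_expChar_pow]
  exact sub_mem huq (hfrob _ huw)

theorem mem_of_pow_mem_bracketPow {N : Ideal R} (hJ : J ≤ I ⊔ N) (hN : N ≤ J)
    (hann : ∀ a, (∀ b ∈ I, a * b ∈ J * I) → a ∈ J) {e : ℕ}
    (hfrob : ∀ w, w ^ p ^ e ∈ I ⊔ bracketPow N (p ^ e) → w ∈ I ⊔ N)
    (hJI : ∀ b ∈ I, b ^ p ^ e ∈ bracketPow J (p ^ e) * I → b ∈ J * I)
    {a : R} (ha : a ^ p ^ e ∈ bracketPow J (p ^ e)) : a ∈ J := by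
  have hq := (expChar_pow_pos R p e).ne'
  have hJq : bracketPow J (p ^ e) ≤ I ⊔ bracketPow N (p ^ e) := by
    rw [bracketPow_eq_map, bracketPow_eq_map]
    refine (Ideal.map_mono hJ).trans ?_
    rw [Ideal.map_sup]
    exact sup_le_sup_right (bracketPow_le_self I hq) _
  obtain ⟨i, hi, g, hg, rfl⟩ := Submodule.mem_sup.1 (hfrob a (hJq ha))
  have hiq : i ^ p ^ e ∈ bracketPow J (p ^ e) := by
    have := sub_mem ha (Ideal.span_mono (Set.image_mono hN) (pow_mem_bracketPow _ hg))
    rwa [← sub_pow_expChar_pow, add_sub_cancel_right] at this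
  refine add_mem (hann i fun c hc => hJI _ (I.mul_mem_left i hc) ?_) (hN hg)
  rw [mul_pow]
  exact Ideal.mul_mem_mul hiq (I.pow_mem_of_mem hc _ (Nat.pos_of_ne_zero hq))

theorem pow_mul_notMem_bracketPow_mul [IsNoetherianRing R] [IsLocalRing R] {x z : R} {d : ℕ}
    {x' : Fin d → R} (hreg : IsRegular R (x :: List.ofFn x')) {e : ℕ}
    (hz : z ^ p ^ e ∉ I ⊔ Ideal.span (Set.range fun i => x' i ^ p ^ e)) :
    (x * z) ^ p ^ e ∉ bracketPow (Ideal.span ({x} ∪ Set.range x')) (p ^ e) * I := by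
  have hofList : Ideal.ofList ((List.ofFn x').map (· ^ p ^ e)) =
      Ideal.span (Set.range fun i => x' i ^ p ^ e) := by
    rw [List.map_ofFn]
    exact congrArg Ideal.span (Set.ext fun _ => List.mem_ofFn' _ _)
  intro h
  rw [bracketPow_span, Set.image_union, Ideal.span_union, Set.image_singleton, ← Set.range_comp,
    mul_pow] at h
  refine hz (mem_sup_of_mul_mem_span_singleton_sup_mul (fun v hv => ?_) h)
  rw [← hofList] at hv ⊢
  exact hreg.mem_ofList_map_pow_of_pow_mul_mem (expChar_pow_pos R p e).ne' hv

end FrobeniusPowers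

theorem statement13_general {R : Type*} [CommRing R] [IsNoetherianRing R] [IsLocalRing R]
    (p : ℕ) (hp : p.Prime) (hp2 : 2 < p) [CharP R p]
    (I : Ideal R)
    (x : R) (hxI : x ∈ I)
    {d : ℕ} (x' : Fin d → R)
    (hreg : RingTheory.Sequence.IsRegular R (x :: List.ofFn x'))
    (hlen : IsFiniteLength R (R ⧸ Ideal.span ({x} ∪ Set.range x')))
    (z : R) (hz : z ∉ I + Ideal.span (Set.range x'))
    (u : R)
    (huz : u - x * z ∈ Ideal.span ({x} ∪ Set.range x') * I)
    (h1 : ∀ r ∈ IsLocalRing.maximalIdeal R,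
      r * u ∈ Ideal.span ({x} ∪ Set.range x') * I)
    (h2 : ∀ b ∈ I,
      (∀ r ∈ IsLocalRing.maximalIdeal R,
        r * b ∈ Ideal.span ({x} ∪ Set.range x') * I) →
      b ∈ Ideal.span {u} + Ideal.span ({x} ∪ Set.range x') * I)
    (h3 : ∀ a : R,
      (∀ b ∈ I, a * b ∈ Ideal.span ({x} ∪ Set.range x') * I) →
      a ∈ Ideal.span ({x} ∪ Set.range x'))
    (h4 : ∀ (w : R) (e : ℕ),
      w ^ p ^ e ∈ I + Ideal.span (Set.range fun i => x' i ^ p ^ e) →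
      w ∈ I + Ideal.span (Set.range x')) :
    FrobeniusClosed p
      ((Ideal.span ({x} ∪ Set.range x')).map (toPcc I (1 : R))) := by
  have := Fact.mk hp
  set J := Ideal.span ({x} ∪ Set.range x')
  obtain ⟨n, hn⟩ := exists_maximalIdeal_pow_le_of_isFiniteLength hlen
  have hJI (e : ℕ) : ∀ b ∈ I, b ^ p ^ e ∈ bracketPow J (p ^ e) * I → b ∈ J * I := fun _ =>
    mem_mul_of_pow_mem_bracketPow_mul hn h1 h2 huz
      (pow_mul_notMem_bracketPow_mul hreg fun hzq => hz (h4 z e hzq))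
  have hJ : J ≤ I ⊔ Ideal.span (Set.range x') :=
    Ideal.span_le.2 <| Set.union_subset (Set.singleton_subset_iff.2 (Ideal.mem_sup_left hxI))
      (Ideal.span_le.1 le_sup_right)
  have hNq (e : ℕ) : bracketPow (Ideal.span (Set.range x')) (p ^ e) =
      Ideal.span (Set.range fun i => x' i ^ p ^ e) := by
    rw [bracketPow_span, ← Set.range_comp]
    rfl
  refine FrobeniusClosed.map_toPcc_one (by omega) (fun a ⟨e, ha⟩ => ?_) hJI
  exact mem_of_pow_mem_bracketPow hJ (Ideal.span_mono Set.subset_union_right) h3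
    (fun w hw => h4 w e (hNq e ▸ hw)) (hJI e) ha

/-- Under the hypotheses of the main theorem (`p > 2`, `R` Noetherian
local of characteristic `p`, `x ∈ I` a nonzerodivisor completed to a regular sequence
`x, x₂, …, x_d` with `R/J` of finite length, `u = x·z mod J·I` a socle generator of
`I/JI` with `I/JI` faithful over `R/J`, and the F-injectivity-type condition (iv) on
`R/I`), the expanded ideal `JS` of the pseudocanonical cover `S = S(1)` is Frobenius
closed. -/
theorem statement13 {R : Type*} [CommRing R] [IsNoetherianRing R] [IsLocalRing R]
    (p : ℕ) (hp : p.Prime) (hp2 : 2 < p) [CharP R p]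
    (I : Ideal R) (hI : I ≠ ⊤)
    (x : R) (hxI : x ∈ I) (hxnzd : x ∈ nonZeroDivisors R)
    {d : ℕ} (x' : Fin d → R)
    (hreg : RingTheory.Sequence.IsRegular R (x :: List.ofFn x'))
    (hlen : IsFiniteLength R (R ⧸ Ideal.span ({x} ∪ Set.range x')))
    (z : R) (hz : z ∉ I + Ideal.span (Set.range x'))
    (u : R) (hu : u ∈ I)
    (huz : u - x * z ∈ Ideal.span ({x} ∪ Set.range x') * I)
    (h1 : ∀ r ∈ IsLocalRing.maximalIdeal R,
      r * u ∈ Ideal.span ({x} ∪ Set.range x') * I)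
    (h2 : ∀ b ∈ I,
      (∀ r ∈ IsLocalRing.maximalIdeal R,
        r * b ∈ Ideal.span ({x} ∪ Set.range x') * I) →
      b ∈ Ideal.span {u} + Ideal.span ({x} ∪ Set.range x') * I)
    (h3 : ∀ a : R,
      (∀ b ∈ I, a * b ∈ Ideal.span ({x} ∪ Set.range x') * I) →
      a ∈ Ideal.span ({x} ∪ Set.range x'))
    (h4 : ∀ (w : R) (e : ℕ),
      w ^ p ^ e ∈ I + Ideal.span (Set.range fun i => x' i ^ p ^ e) →
      w ∈ I + Ideal.span (Set.range x')) :
    FrobeniusClosed p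
      ((Ideal.span ({x} ∪ Set.range x')).map (toPcc I (1 : R))) :=
  statement13_general p hp hp2 I x hxI x' hreg hlen z hz u huz h1 h2 h3 h4
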